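/- arXiv:1708.02308 — 2 statements merged into one kernel-verified Lean document; each statement's English description precedes it below -/
import Mathlib

section
/- For any β > 0, the function ξ ↦ ‖ξ‖_p^β on ℚ_p^n is negative definite. -/
open scoped BigOperators ComplexOrder

noncomputable section NegDefAux

local notation "conj'" => starRingEnd ℂ

/-- Positivity of the indicator kernel of the equivalence relation `d · · < v`. -/
private lemma nd_classes_nonneg (M : ℕ) (d : Fin M → Fin M → ℝ) (μ : Fin M → ℂ) (v : ℝ)
    (hv : 0 < v) (hsymm : ∀ i j, d j i = d i j) (hrefl : ∀ i, d i i = 0)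
    (hultra : ∀ i j l, d i j ≤ max (d i l) (d l j)) :
    0 ≤ ∑ i, ∑ j, (if d i j < v then (1:ℂ) else 0) * μ i * conj' (μ j) := by
  have hne : ∀ i : Fin M, (Finset.univ.filter fun j => d i j < v).Nonempty := by
    intro i
    exact ⟨i, by simp [hrefl i, hv]⟩
  set c : Fin M → Fin M := fun i => (Finset.univ.filter fun j => d i j < v).min' (hne i) with hc
  have hmem : ∀ i, d i (c i) < v := by
    intro i
    have := Finset.min'_mem _ (hne i)
    simpa using this
  have key : ∀ i j, d i j < v ↔ c i = c j := by
    intro i j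
    constructor
    · intro h
      have hset : (Finset.univ.filter fun k => d i k < v) =
          (Finset.univ.filter fun k => d j k < v) := by
        ext k
        simp only [Finset.mem_filter, Finset.mem_univ, true_and]
        constructor
        · intro hk
          calc d j k ≤ max (d j i) (d i k) := hultra j k i
          _ < v := max_lt (by rw [hsymm]; exact h) hk
        · intro hk
          calc d i k ≤ max (d i j) (d j k) := hultra i k j
          _ < v := max_lt h hk
      simp only [hc]
      congr 1
    · intro h
      have h1 : d i (c i) < v := hmem i
      have h2 : d j (c j) < v := hmem j
      calc d i j ≤ max (d i (c i)) (d (c i) j) := hultra i j (c i)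
      _ < v := by
          refine max_lt h1 ?_
          rw [hsymm, h]
          exact h2
  set T : Fin M → ℂ := fun k => ∑ j ∈ Finset.univ.filter fun j => c j = k, μ j with hT
  have step1 : ∀ i, ∑ j, (if d i j < v then (1:ℂ) else 0) * μ i * conj' (μ j)
      = μ i * conj' (T (c i)) := by
    intro i
    have : μ i * conj' (T (c i)) = ∑ j ∈ Finset.univ.filter fun j => c j = c i,
        μ i * conj' (μ j) := by
      rw [hT]
      simp only [map_sum, Finset.mul_sum]
    rw [this, Finset.sum_filter]
    refine Finset.sum_congr rfl fun j _ => ?_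
    by_cases h : c i = c j
    · rw [if_pos ((key i j).mpr h), if_pos h.symm]
      ring
    · rw [if_neg (fun hh => h ((key i j).mp hh)), if_neg (Ne.symm h)]
      ring
  have step2 : ∑ i, μ i * conj' (T (c i)) = ∑ k, T k * conj' (T k) := by
    rw [← Finset.sum_fiberwise Finset.univ c (fun i => μ i * conj' (T (c i)))]
    refine Finset.sum_congr rfl fun k _ => ?_
    have : ∀ i ∈ Finset.univ.filter fun i => c i = k,
        μ i * conj' (T (c i)) = μ i * conj' (T k) := by
      intro i hi
      rw [(Finset.mem_filter.mp hi).2]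
    rw [Finset.sum_congr rfl this, ← Finset.sum_mul, hT]
  calc (0:ℂ) ≤ ∑ k, T k * conj' (T k) := by
        refine Finset.sum_nonneg fun k _ => ?_
        rw [Complex.mul_conj]
        exact_mod_cast Complex.normSq_nonneg (T k)
  _ = ∑ i, ∑ j, (if d i j < v then (1:ℂ) else 0) * μ i * conj' (μ j) := by
        rw [← step2]
        exact (Finset.sum_congr rfl fun i _ => (step1 i)).symm

/-- Non-positivity of the indicator kernel of `v ≤ d · ·` against mean-zero weights. -/
private lemma nd_scale_nonpos (M : ℕ) (d : Fin M → Fin M → ℝ) (μ : Fin M → ℂ) (v : ℝ)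
    (hv : 0 < v) (hsymm : ∀ i j, d j i = d i j) (hrefl : ∀ i, d i i = 0)
    (hultra : ∀ i j l, d i j ≤ max (d i l) (d l j)) (hsum : ∑ i, μ i = 0) :
    ∑ i, ∑ j, (if v ≤ d i j then (1:ℂ) else 0) * μ i * conj' (μ j) ≤ 0 := by
  have hsplit : ∀ i j, (if v ≤ d i j then (1:ℂ) else 0)
      = 1 - (if d i j < v then (1:ℂ) else 0) := by
    intro i j
    by_cases h : d i j < v
    · rw [if_neg (not_le.mpr h), if_pos h]; ring
    · rw [if_pos (not_lt.mp h), if_neg h]; ring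
  have expand : ∑ i, ∑ j, (if v ≤ d i j then (1:ℂ) else 0) * μ i * conj' (μ j)
      = (∑ i, μ i) * conj' (∑ j, μ j)
        - ∑ i, ∑ j, (if d i j < v then (1:ℂ) else 0) * μ i * conj' (μ j) := by
    rw [map_sum, Finset.sum_mul_sum, ← Finset.sum_sub_distrib]
    refine Finset.sum_congr rfl fun i _ => ?_
    rw [← Finset.sum_sub_distrib]
    refine Finset.sum_congr rfl fun j _ => ?_
    rw [hsplit]
    ring
  rw [expand, hsum, zero_mul, zero_sub]
  exact neg_nonpos.mpr (nd_classes_nonneg M d μ v hv hsymm hrefl hultra)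

/-- An ultrametric (pseudo)metric on a finite index set is of negative type. -/
private lemma nd_negtype (k : ℕ) : ∀ (S : Finset ℝ) (M : ℕ) (d : Fin M → Fin M → ℝ)
    (μ : Fin M → ℂ), S.card ≤ k → (∀ i j, d i j ∈ S) → (∀ i j, d j i = d i j) →
    (∀ i, d i i = 0) → (∀ i j, 0 ≤ d i j) →
    (∀ i j l, d i j ≤ max (d i l) (d l j)) → (∑ i, μ i = 0) →
    ∑ i, ∑ j, (d i j : ℂ) * μ i * conj' (μ j) ≤ 0 := by
  induction k with
  | zero =>
    intro S M d μ hcard hmem hsymm hrefl hnn hultra hsum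
    rcases Nat.eq_zero_or_pos M with hM | hM
    · subst hM; simp
    · exact absurd (hmem ⟨0, hM⟩ ⟨0, hM⟩) (by simp [Finset.card_eq_zero.mp (Nat.le_zero.mp hcard)])
  | succ k ih =>
    intro S M d μ hcard hmem hsymm hrefl hnn hultra hsum
    rcases Nat.eq_zero_or_pos M with hM | hM
    · subst hM; simp
    set i0 : Fin M := ⟨0, hM⟩
    have hSne : S.Nonempty := ⟨d i0 i0, hmem i0 i0⟩
    set v := S.max' hSne with hvdef
    by_cases hv : v ≤ 0
    · have hzero : ∀ i j, d i j = 0 := fun i j =>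
        le_antisymm ((S.le_max' _ (hmem i j)).trans hv) (hnn i j)
      simp [hzero]
    push_neg at hv
    have h0S : (0:ℝ) ∈ S := hrefl i0 ▸ hmem i0 i0
    have h0e : (0:ℝ) ∈ S.erase v := Finset.mem_erase.mpr ⟨ne_of_lt hv, h0S⟩
    set u := (S.erase v).max' ⟨0, h0e⟩ with hudef
    have hu0 : (0:ℝ) ≤ u := Finset.le_max' _ 0 h0e
    have huv : u ≤ v := (S.le_max' u (Finset.mem_erase.mp (Finset.max'_mem _ _)).2)
    set d' : Fin M → Fin M → ℝ := fun i j => if d i j = v then u else d i j with hd'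
    have hmem' : ∀ i j, d' i j ∈ S.erase v := by
      intro i j
      by_cases h : d i j = v
      · simp only [hd', if_pos h]
        exact Finset.max'_mem _ _
      · simp only [hd', if_neg h]
        exact Finset.mem_erase.mpr ⟨h, hmem i j⟩
    have hsymm' : ∀ i j, d' j i = d' i j := by
      intro i j; simp only [hd', hsymm i j]
    have hrefl' : ∀ i, d' i i = 0 := by
      intro i
      simp only [hd', hrefl i]
      rw [if_neg (ne_of_lt hv)]
    have hnn' : ∀ i j, 0 ≤ d' i j := by
      intro i j
      by_cases h : d i j = v
      · simp only [hd', if_pos h]; exact hu0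
      · simp only [hd', if_neg h]; exact hnn i j
    have hf : ∀ x y : ℝ, x ∈ S → y ∈ S → x ≤ y →
        (if x = v then u else x) ≤ (if y = v then u else y) := by
      intro x y hx hy hxy
      by_cases hxv : x = v
      · by_cases hyv : y = v
        · rw [if_pos hxv, if_pos hyv]
        · exact absurd (le_antisymm (S.le_max' y hy) ((le_of_eq hxv.symm).trans hxy)) hyv
      · by_cases hyv : y = v
        · rw [if_neg hxv, if_pos hyv]
          exact Finset.le_max' _ x (Finset.mem_erase.mpr ⟨hxv, hx⟩)
        · rw [if_neg hxv, if_neg hyv]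
          exact hxy
    have hultra' : ∀ i j l, d' i j ≤ max (d' i l) (d' l j) := by
      intro i j l
      rcases le_total (d i l) (d l j) with hcase | hcase
      · have h1 : d i j ≤ d l j := (hultra i j l).trans (max_le hcase le_rfl)
        exact le_max_of_le_right (hf _ _ (hmem i j) (hmem l j) h1)
      · have h1 : d i j ≤ d i l := (hultra i j l).trans (max_le le_rfl hcase)
        exact le_max_of_le_left (hf _ _ (hmem i j) (hmem i l) h1)
    have hdec : ∀ i j, (d i j : ℂ)
        = (d' i j : ℂ) + ((v - u : ℝ) : ℂ) * (if v ≤ d i j then (1:ℂ) else 0) := by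
      intro i j
      by_cases h : d i j = v
      · rw [if_pos (h.ge)]
        simp only [hd', if_pos h, h]
        push_cast
        ring
      · have hlt : d i j < v := lt_of_le_of_ne (S.le_max' _ (hmem i j)) h
        rw [if_neg (not_le.mpr hlt)]
        simp only [hd', if_neg h]
        ring
    have hsplit : ∑ i, ∑ j, (d i j : ℂ) * μ i * conj' (μ j)
        = (∑ i, ∑ j, (d' i j : ℂ) * μ i * conj' (μ j))
          + ((v - u : ℝ) : ℂ) * ∑ i, ∑ j, (if v ≤ d i j then (1:ℂ) else 0) * μ i * conj' (μ j) := by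
      rw [Finset.mul_sum, ← Finset.sum_add_distrib]
      refine Finset.sum_congr rfl fun i _ => ?_
      rw [Finset.mul_sum, ← Finset.sum_add_distrib]
      refine Finset.sum_congr rfl fun j _ => ?_
      rw [hdec i j]
      ring
    rw [hsplit]
    have hcard' : (S.erase v).card ≤ k := by
      rw [Finset.card_erase_of_mem (S.max'_mem hSne)]
      omega
    have h1 := ih (S.erase v) M d' μ hcard' hmem' hsymm' hrefl' hnn' hultra' hsum
    have h2 := nd_scale_nonpos M d μ v hv hsymm hrefl hultra hsum
    have h3 : ((v - u : ℝ) : ℂ) * ∑ i, ∑ j, (if v ≤ d i j then (1:ℂ) else 0) * μ i * conj' (μ j)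
        ≤ 0 := by
      have hvu : (0:ℂ) ≤ ((v - u : ℝ) : ℂ) := by
        exact_mod_cast sub_nonneg.mpr huv
      calc ((v - u : ℝ) : ℂ) * ∑ i, ∑ j, (if v ≤ d i j then (1:ℂ) else 0) * μ i * conj' (μ j)
          ≤ ((v - u : ℝ) : ℂ) * 0 := mul_le_mul_of_nonneg_left h2 hvu
      _ = 0 := mul_zero _
    calc _ ≤ (0:ℂ) + 0 := add_le_add h1 h3
    _ = 0 := add_zero 0

end NegDefAux

def IsNegativeDefinite {p n : ℕ} [Fact p.Prime] (ψ : (Fin n → ℚ_[p]) → ℂ) : Prop :=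
  ∀ m : ℕ, 0 < m → ∀ x : Fin m → (Fin n → ℚ_[p]), ∀ l : Fin m → ℂ,
    0 ≤ ∑ i, ∑ j,
      (ψ (x i) + (starRingEnd ℂ) (ψ (x j)) - ψ (x i - x j)) * l i * (starRingEnd ℂ) (l j)

/-- For any `β > 0`, the function `ξ ↦ ‖ξ‖_p^β` on `ℚ_p^n` is negative definite. -/
theorem stmt_5 {p n : ℕ} [Fact p.Prime] (β : ℝ) (hβ : 0 < β) :
    IsNegativeDefinite (fun ξ : Fin n → ℚ_[p] => ((‖ξ‖ ^ β : ℝ) : ℂ)) := by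
  intro m hm x l
  simp only []
  set y : Fin (m + 1) → (Fin n → ℚ_[p]) := Fin.cons 0 x with hy
  set μ : Fin (m + 1) → ℂ := Fin.cons (-(∑ i, l i)) l with hμ
  have hμsum : ∑ i, μ i = 0 := by
    rw [hμ, Fin.sum_cons]
    ring
  have hN0 : ‖(0 : Fin n → ℚ_[p])‖ ^ β = 0 := by
    rw [norm_zero]
    exact Real.zero_rpow hβ.ne'
  have hU : ∀ a b : Fin n → ℚ_[p], ‖a + b‖ ≤ max ‖a‖ ‖b‖ := by
    intro a b
    rw [pi_norm_le_iff_of_nonneg (le_max_of_le_left (norm_nonneg a))]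
    intro i
    exact (Padic.nonarchimedean _ _).trans
      (max_le_max (norm_le_pi_norm a i) (norm_le_pi_norm b i))
  set d : Fin (m + 1) → Fin (m + 1) → ℝ := fun i j => ‖y i - y j‖ ^ β with hd
  have hsymm : ∀ i j, d j i = d i j := by
    intro i j
    simp only [hd]
    rw [norm_sub_rev]
  have hrefl : ∀ i, d i i = 0 := by
    intro i
    simp only [hd, sub_self]
    exact hN0
  have hnn : ∀ i j, 0 ≤ d i j := fun i j => Real.rpow_nonneg (norm_nonneg _) β
  have hultra : ∀ i j k, d i j ≤ max (d i k) (d k j) := by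
    intro i j k
    have hnorm : ‖y i - y j‖ ≤ max ‖y i - y k‖ ‖y k - y j‖ := by
      have : y i - y j = (y i - y k) + (y k - y j) := by ring
      rw [this]
      exact hU _ _
    simp only [hd]
    rcases le_total ‖y i - y k‖ ‖y k - y j‖ with hc | hc
    · refine le_max_of_le_right ?_
      exact Real.rpow_le_rpow (norm_nonneg _) (hnorm.trans (max_le hc le_rfl)) hβ.le
    · refine le_max_of_le_left ?_
      exact Real.rpow_le_rpow (norm_nonneg _) (hnorm.trans (max_le le_rfl hc)) hβ.le
  set S : Finset ℝ := Finset.image (fun q : Fin (m + 1) × Fin (m + 1) => d q.1 q.2)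
    Finset.univ with hS
  have hmem : ∀ i j, d i j ∈ S := fun i j =>
    Finset.mem_image.mpr ⟨(i, j), Finset.mem_univ _, rfl⟩
  have total := nd_negtype S.card S (m + 1) d μ le_rfl hmem hsymm hrefl hnn hultra hμsum
  -- the extended kernel sum equals minus the metric sum
  have hzero1 : ∑ i : Fin (m + 1), ∑ j : Fin (m + 1),
      ((‖y i‖ ^ β : ℝ) : ℂ) * μ i * (starRingEnd ℂ) (μ j) = 0 := by
    calc ∑ i : Fin (m + 1), ∑ j : Fin (m + 1),
        ((‖y i‖ ^ β : ℝ) : ℂ) * μ i * (starRingEnd ℂ) (μ j)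
        = ∑ i : Fin (m + 1), ((‖y i‖ ^ β : ℝ) : ℂ) * μ i * (starRingEnd ℂ) (∑ j, μ j) := by
          refine Finset.sum_congr rfl fun i _ => ?_
          rw [map_sum, Finset.mul_sum]
    _ = 0 := by rw [hμsum]; simp
  have hzero2 : ∑ i : Fin (m + 1), ∑ j : Fin (m + 1),
      ((‖y j‖ ^ β : ℝ) : ℂ) * μ i * (starRingEnd ℂ) (μ j) = 0 := by
    calc ∑ i : Fin (m + 1), ∑ j : Fin (m + 1),
        ((‖y j‖ ^ β : ℝ) : ℂ) * μ i * (starRingEnd ℂ) (μ j)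
        = ∑ i : Fin (m + 1), μ i * ∑ j, ((‖y j‖ ^ β : ℝ) : ℂ) * (starRingEnd ℂ) (μ j) := by
          refine Finset.sum_congr rfl fun i _ => ?_
          rw [Finset.mul_sum]
          exact Finset.sum_congr rfl fun j _ => by ring
    _ = (∑ i : Fin (m + 1), μ i) * ∑ j, ((‖y j‖ ^ β : ℝ) : ℂ) * (starRingEnd ℂ) (μ j) := by
          rw [← Finset.sum_mul]
    _ = 0 := by rw [hμsum, zero_mul]
  have hKsum : ∑ i : Fin (m + 1), ∑ j : Fin (m + 1),
      (((‖y i‖ ^ β : ℝ) : ℂ) + (starRingEnd ℂ) ((‖y j‖ ^ β : ℝ) : ℂ)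
        - ((‖y i - y j‖ ^ β : ℝ) : ℂ)) * μ i * (starRingEnd ℂ) (μ j)
      = - ∑ i : Fin (m + 1), ∑ j : Fin (m + 1), ((d i j : ℝ) : ℂ) * μ i * (starRingEnd ℂ) (μ j) := by
    have expand : ∀ i j : Fin (m + 1),
        (((‖y i‖ ^ β : ℝ) : ℂ) + (starRingEnd ℂ) ((‖y j‖ ^ β : ℝ) : ℂ)
          - ((‖y i - y j‖ ^ β : ℝ) : ℂ)) * μ i * (starRingEnd ℂ) (μ j)
        = ((‖y i‖ ^ β : ℝ) : ℂ) * μ i * (starRingEnd ℂ) (μ j)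
          + ((‖y j‖ ^ β : ℝ) : ℂ) * μ i * (starRingEnd ℂ) (μ j)
          - ((d i j : ℝ) : ℂ) * μ i * (starRingEnd ℂ) (μ j) := by
      intro i j
      simp only [hd, Complex.conj_ofReal]
      ring
    calc ∑ i : Fin (m + 1), ∑ j : Fin (m + 1),
        (((‖y i‖ ^ β : ℝ) : ℂ) + (starRingEnd ℂ) ((‖y j‖ ^ β : ℝ) : ℂ)
          - ((‖y i - y j‖ ^ β : ℝ) : ℂ)) * μ i * (starRingEnd ℂ) (μ j)
        = ∑ i : Fin (m + 1), ∑ j : Fin (m + 1),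
          (((‖y i‖ ^ β : ℝ) : ℂ) * μ i * (starRingEnd ℂ) (μ j)
            + ((‖y j‖ ^ β : ℝ) : ℂ) * μ i * (starRingEnd ℂ) (μ j)
            - ((d i j : ℝ) : ℂ) * μ i * (starRingEnd ℂ) (μ j)) := by
          exact Finset.sum_congr rfl fun i _ => Finset.sum_congr rfl fun j _ => expand i j
    _ = (∑ i : Fin (m + 1), ∑ j : Fin (m + 1), ((‖y i‖ ^ β : ℝ) : ℂ) * μ i * (starRingEnd ℂ) (μ j))
          + (∑ i : Fin (m + 1), ∑ j : Fin (m + 1), ((‖y j‖ ^ β : ℝ) : ℂ) * μ i * (starRingEnd ℂ) (μ j))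
          - ∑ i : Fin (m + 1), ∑ j : Fin (m + 1), ((d i j : ℝ) : ℂ) * μ i * (starRingEnd ℂ) (μ j) := by
          simp only [Finset.sum_add_distrib, Finset.sum_sub_distrib]
    _ = _ := by rw [hzero1, hzero2]; ring
  -- the extended kernel sum equals the goal sum
  have hext : ∑ i : Fin (m + 1), ∑ j : Fin (m + 1),
      (((‖y i‖ ^ β : ℝ) : ℂ) + (starRingEnd ℂ) ((‖y j‖ ^ β : ℝ) : ℂ)
        - ((‖y i - y j‖ ^ β : ℝ) : ℂ)) * μ i * (starRingEnd ℂ) (μ j)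
      = ∑ i : Fin m, ∑ j : Fin m,
        (((‖x i‖ ^ β : ℝ) : ℂ) + (starRingEnd ℂ) ((‖x j‖ ^ β : ℝ) : ℂ)
          - ((‖x i - x j‖ ^ β : ℝ) : ℂ)) * l i * (starRingEnd ℂ) (l j) := by
    rw [Fin.sum_univ_succ]
    have h0 : ∑ j : Fin (m + 1),
        (((‖y 0‖ ^ β : ℝ) : ℂ) + (starRingEnd ℂ) ((‖y j‖ ^ β : ℝ) : ℂ)
          - ((‖y 0 - y j‖ ^ β : ℝ) : ℂ)) * μ 0 * (starRingEnd ℂ) (μ j) = 0 := by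
      refine Finset.sum_eq_zero fun j _ => ?_
      have hy0 : y 0 = 0 := by rw [hy]; exact Fin.cons_zero _ _
      rw [hy0, hN0, zero_sub, norm_neg, Complex.conj_ofReal]
      push_cast
      ring
    rw [h0, zero_add]
    refine Finset.sum_congr rfl fun i _ => ?_
    rw [Fin.sum_univ_succ]
    have hysucc : ∀ i : Fin m, y i.succ = x i := by
      intro i; rw [hy]; exact Fin.cons_succ _ _ _
    have hμsucc : ∀ i : Fin m, μ i.succ = l i := by
      intro i; rw [hμ]; exact Fin.cons_succ _ _ _
    have h1 : (((‖y i.succ‖ ^ β : ℝ) : ℂ) + (starRingEnd ℂ) ((‖y 0‖ ^ β : ℝ) : ℂ)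
        - ((‖y i.succ - y 0‖ ^ β : ℝ) : ℂ)) * μ i.succ * (starRingEnd ℂ) (μ 0) = 0 := by
      have hy0 : y 0 = 0 := by rw [hy]; exact Fin.cons_zero _ _
      rw [hy0, hN0, sub_zero, Complex.conj_ofReal]
      push_cast
      ring
    rw [h1, zero_add]
    refine Finset.sum_congr rfl fun j _ => ?_
    rw [hysucc i, hysucc j, hμsucc i, hμsucc j]
  rw [← hext, hKsum]
  exact neg_nonneg.mpr total
end

section
/- Let p : ℚ_p^n → ℝ_{≥0} be continuous, negative definite with p(0) = 0, and suppose e^{−t p(ξ)} ∈ L^1(ℚ_p^n) for each t > 0, with Z_t(x) = ℱ^{−1}_{ξ→x}(e^{−t p(ξ)}) ≥ 0 defining a probability density for each t > 0. Then for u_0 ∈ 𝒟(ℚ_p^n), the function u(x,t) = ∫ χ_p(−x·ξ) e^{−t p(ξ)} û_0(ξ) d^n ξ satisfies: u(·,t) ∈ L^1 ∩ L^2 for every t ≥ 0, u(x,0) = u_0(x), t ↦ u(x,t) is differentiable with ∂u/∂t(x,t) = −∫ χ_p(−x·ξ) p(ξ) e^{−t p(ξ)} û_0(ξ) d^n ξ,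 and u solves ∂u/∂t = −ℱ^{−1}(p(ξ) ℱ_{x→ξ} u). -/
open scoped BigOperators ComplexOrder
open MeasureTheory

open Matrix Metric Filter Topology Function
open scoped Convolution

/-!
For a nonarchimedean field `K` and a character `e` of `K` that is trivial exactly on the unit
ball, orthogonality says that `∫_{‖w‖ ≤ ‖c‖} e (z ⬝ᵥ w) dw` is `μ(B(‖c‖))` or `0` according as
`‖z‖ ≤ ‖c‖⁻¹` or not. Integrating `e (w ⬝ᵥ η)` over `B(‖c‖) × B(1)` in both orders turns this into
`μ(B(‖c‖)) μ(B(‖c‖⁻¹)) = 1` for the self-dual normalisation `μ(B(1)) = 1`, and truncating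
`ℱ(ℱ⁻¹ h)(a)` to the balls `B(‖c‖⁻¹)` turns it into the averages of `h` over `B(a, ‖c‖)`; letting
`c → 0` gives Fourier inversion at every point of continuity of `h`.

A test function `u₀` is invariant under small translations and has compact support, so `û₀` is
continuous with compact support. On that support `P` is bounded, which dominates the
`t`-derivative of `e^{-tP} û₀`; and `ℱ u(·,t) = e^{-tP} û₀` is inversion again. Finally
`u(·,t) = u₀ ⋆ Z_t` is integrable because the heat kernel `Z_t` is nonnegative with integral
`1`, hence integrable.
-/

section MeasureTheory

variable {α : Type*} [MeasurableSpace α] {μ : Measure α}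

lemma integrable_of_nonneg_of_integral_re_ne_zero {f : α → ℂ} (hf : ∀ a, 0 ≤ f a)
    (h : ∫ a, (f a).re ∂μ ≠ 0) : Integrable f μ :=
  (Integrable.of_integral_ne_zero h).ofReal.congr
    (ae_of_all _ fun a => (Complex.eq_re_of_ofReal_le (hf a)).symm)

lemma memLp_two_of_integrable_of_norm_le {E : Type*} [NormedAddCommGroup E] {f : α → E}
    (hf : Integrable f μ) {C : ℝ} (hC : ∀ a, ‖f a‖ ≤ C) : MemLp f 2 μ := by
  rw [memLp_two_iff_integrable_sq_norm hf.1]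
  refine (hf.norm.bdd_mul (c := C) hf.1.norm (ae_of_all _ fun a => ?_)).congr
    (ae_of_all _ fun a => (sq _).symm)
  simpa using hC a

lemma norm_cexp_neg_ofReal_mul (t r : ℝ) : ‖Complex.exp (-t * r)‖ = Real.exp (-t * r) := by
  rw [Complex.norm_exp]
  simp

lemma norm_cexp_neg_ofReal_mul_le {s r C : ℝ} (hr : |r| ≤ C) :
    ‖Complex.exp (-s * r)‖ ≤ Real.exp (|s| * C) := by
  rw [norm_cexp_neg_ofReal_mul, Real.exp_le_exp]
  calc -s * r ≤ |s| * |r| := by rw [← abs_mul, neg_mul]; exact neg_le_abs _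
    _ ≤ |s| * C := mul_le_mul_of_nonneg_left hr (abs_nonneg s)

theorem hasDerivAt_integral_cexp_neg_mul {P : α → ℝ} (hP : Measurable P) {G : α → ℂ}
    (hG : Integrable G μ) {C : ℝ} (hC : ∀ a ∈ support G, |P a| ≤ C) (t : ℝ) :
    HasDerivAt (fun s : ℝ => ∫ a, Complex.exp (-s * P a) * G a ∂μ)
      (-∫ a, P a * Complex.exp (-t * P a) * G a ∂μ) t := by
  have hmeas (s : ℝ) : AEStronglyMeasurable (fun a => Complex.exp (-s * P a) * G a) μ :=
    (by fun_prop : Measurable fun a => Complex.exp (-s * P a)).aestronglyMeasurable.mul hG.1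
  have hbound (s : ℝ) (a : α) :
      ‖Complex.exp (-s * P a) * G a‖ ≤ Real.exp (|s| * C) * ‖G a‖ := by
    rw [norm_mul]
    by_cases ha : G a = 0
    · simp [ha]
    · exact mul_le_mul_of_nonneg_right (norm_cexp_neg_ofReal_mul_le (hC a ha)) (norm_nonneg _)
  have hderiv := hasDerivAt_integral_of_dominated_loc_of_deriv_le (ball_mem_nhds t one_pos)
    (F := fun (s : ℝ) a => Complex.exp (-s * P a) * G a)
    (F' := fun (s : ℝ) a => -(P a * Complex.exp (-s * P a) * G a))
    (bound := fun a => C * (Real.exp ((|t| + 1) * C) * ‖G a‖))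
    (Eventually.of_forall hmeas)
    ((hG.norm.const_mul _).mono' (hmeas t) (ae_of_all _ (hbound t)))
    (((by fun_prop : Measurable fun a => (P a : ℂ)).aestronglyMeasurable.mul (hmeas t)).neg.congr
      (ae_of_all _ fun a => by simp only [Pi.neg_apply, Pi.mul_apply, mul_assoc]))
    (ae_of_all _ fun a s hs => ?_) ((hG.norm.const_mul _).const_mul _)
    (ae_of_all _ fun a s _ => ?_)
  · simpa only [integral_neg] using hderiv.2
  · by_cases ha : G a = 0
    · simp [ha]
    have hs : |s| ≤ |t| + 1 := by
      have := abs_sub_abs_le_abs_sub s t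
      rw [mem_ball, Real.dist_eq] at hs
      linarith
    have hC0 : 0 ≤ C := (abs_nonneg _).trans (hC a ha)
    rw [norm_neg, mul_assoc, norm_mul, Complex.norm_real, Real.norm_eq_abs]
    refine mul_le_mul (hC a ha) ((hbound s a).trans ?_) (norm_nonneg _) hC0
    gcongr
  · have hexp : HasDerivAt (fun y : ℝ => -(y : ℂ) * P a) (-P a) s := by
      simpa using (hasDerivAt_id s).ofReal_comp.neg.mul_const (P a : ℂ)
    exact (hexp.cexp.mul_const (G a)).congr_deriv (by ring)

end MeasureTheory

lemma integral_eq_zero_of_add_right_eq_mul {G : Type*} [AddGroup G] [MeasurableSpace G]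
    [MeasurableAdd G] {μ : Measure G} [μ.IsAddRightInvariant] {g : G → ℂ} {w₀ : G} {c : ℂ}
    (hc : c ≠ 1) (hg : ∀ w, g (w + w₀) = c * g w) : ∫ w, g w ∂μ = 0 := by
  have h := integral_add_right_eq_self g w₀ (μ := μ)
  simp_rw [hg, integral_const_mul] at h
  have : (c - 1) * ∫ w, g w ∂μ = 0 := by rw [sub_mul, h, one_mul, sub_self]
  exact (mul_eq_zero.1 this).resolve_left (sub_ne_zero.2 hc)

lemma IsLocallyConstant.exists_pos_forall_dist_lt_eq {X β : Type*} [PseudoMetricSpace X]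
    [Zero β] {f : X → β} (hf : IsLocallyConstant f) (hcs : HasCompactSupport f) :
    ∃ δ > 0, ∀ x y, dist x y < δ → f x = f y := by
  obtain ⟨δ, hδ, hball⟩ := lebesgue_number_lemma_of_metric hcs (fun b => hf.isOpen_fiber b)
    (fun x _ => Set.mem_iUnion.2 ⟨f x, rfl⟩)
  have key (x y : X) (hx : x ∈ tsupport f) (hxy : dist x y < δ) : f x = f y := by
    obtain ⟨b, hb⟩ := hball x hx
    exact (hb (mem_ball_self hδ)).trans (hb (mem_ball'.2 hxy)).symm
  refine ⟨δ, hδ, fun x y hxy => ?_⟩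
  by_cases hx : x ∈ tsupport f
  · exact key x y hx hxy
  by_cases hy : y ∈ tsupport f
  · exact (key y x hy (by rwa [dist_comm])).symm
  rw [image_eq_zero_of_notMem_tsupport hx, image_eq_zero_of_notMem_tsupport hy]

lemma tendsto_setAverage_closedBall {X E ι : Type*} [PseudoMetricSpace X] [ProperSpace X]
    [MeasurableSpace X] [OpensMeasurableSpace X] {μ : Measure X} [μ.IsOpenPosMeasure]
    [IsFiniteMeasureOnCompacts μ] [NormedAddCommGroup E] [NormedSpace ℝ E] [CompleteSpace E]
    {h : X → E} {a : X} (hh : LocallyIntegrable h μ) (ha : ContinuousAt h a) {l : Filter ι}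
    {ρ : ι → ℝ} (hρ : Tendsto ρ l (𝓝 0)) (hρ_pos : ∀ i, 0 < ρ i) :
    Tendsto (fun i => ⨍ x in closedBall a (ρ i), h x ∂μ) l (𝓝 (h a)) := by
  rw [Metric.tendsto_nhds]
  intro ε hε
  obtain ⟨δ, hδ, hδh⟩ := Metric.continuousAt_iff.1 ha (ε / 2) (half_pos hε)
  filter_upwards [hρ (Iio_mem_nhds hδ)] with i hi
  set B := closedBall a (ρ i)
  have hfin : μ B < ⊤ := measure_closedBall_lt_top
  have hpos : 0 < μ.real B :=
    ENNReal.toReal_pos (measure_closedBall_pos μ a (hρ_pos i)).ne' hfin.ne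
  have hsub : ⨍ x in B, h x ∂μ - h a = (μ.real B)⁻¹ • ∫ x in B, (h x - h a) ∂μ := by
    rw [setAverage_eq, integral_sub (hh.integrableOn_isCompact (isCompact_closedBall a _))
      (integrableOn_const hfin.ne), setIntegral_const, smul_sub, smul_smul,
      inv_mul_cancel₀ hpos.ne', one_smul]
  rw [dist_eq_norm, hsub, norm_smul, Real.norm_eq_abs, abs_inv, abs_of_pos hpos]
  calc (μ.real B)⁻¹ * ‖∫ x in B, (h x - h a) ∂μ‖ ≤ (μ.real B)⁻¹ * (ε / 2 * μ.real B) := by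
        gcongr
        refine norm_setIntegral_le_of_norm_le_const hfin fun x hx => ?_
        rw [← dist_eq_norm]
        exact (hδh ((mem_closedBall.1 hx).trans_lt hi)).le
    _ = ε / 2 := by field_simp
    _ < ε := half_lt_self hε

namespace NonarchimedeanFourier

variable {K : Type*} [NontriviallyNormedField K] {ι : Type*} [Fintype ι] {e : AddChar K ℂ}

lemma map_neg_dotProduct_mul_map_dotProduct (ξ y z : ι → K) :
    e (-(ξ ⬝ᵥ y)) * e (ξ ⬝ᵥ z) = e (-(ξ ⬝ᵥ (y - z))) := by
  rw [← AddChar.map_add_eq_mul, dotProduct_sub]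
  congr 1
  abel

lemma integrable_addChar_mul (he : Continuous e) (he_norm : ∀ y, ‖e y‖ = 1) {X : Type*}
    [TopologicalSpace X] [MeasurableSpace X] [OpensMeasurableSpace X] {ν : Measure X}
    (φ : X → K) (hφ : Continuous φ) {g : X → ℂ} (hg : Integrable g ν) :
    Integrable (fun x => e (φ x) * g x) ν :=
  hg.bdd_mul (c := 1) (he.comp hφ).aestronglyMeasurable (ae_of_all _ fun _ => (he_norm _).le)

lemma exists_norm_le_map_dotProduct_ne_one (he_one : ∀ y, e y = 1 ↔ ‖y‖ ≤ 1) {c : K}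
    (hc : c ≠ 0) {z : ι → K} (hz : ‖c‖⁻¹ < ‖z‖) : ∃ w : ι → K, ‖w‖ ≤ ‖c‖ ∧ e (z ⬝ᵥ w) ≠ 1 := by
  classical
  obtain ⟨i, hi⟩ : ∃ i, ‖c‖⁻¹ < ‖z i‖ := by
    by_contra! h
    exact hz.not_ge ((pi_norm_le_iff_of_nonneg (by positivity)).2 h)
  refine ⟨Pi.single i c, (Pi.norm_single (G := fun _ => K) c).le, ?_⟩
  rw [dotProduct_single, Ne, he_one, norm_mul, not_le]
  calc 1 = ‖c‖⁻¹ * ‖c‖ := (inv_mul_cancel₀ (norm_ne_zero_iff.2 hc)).symm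
    _ < ‖z i‖ * ‖c‖ := mul_lt_mul_of_pos_right hi (norm_pos_iff.2 hc)

section Ultrametric

variable [IsUltrametricDist K]

lemma norm_dotProduct_le (z w : ι → K) : ‖z ⬝ᵥ w‖ ≤ ‖z‖ * ‖w‖ :=
  IsUltrametricDist.norm_sum_le_of_forall_le_of_nonneg (by positivity) fun i _ => by
    rw [norm_mul]
    exact mul_le_mul (norm_le_pi_norm z i) (norm_le_pi_norm w i) (norm_nonneg _) (norm_nonneg _)

lemma map_dotProduct_eq_one (he_one : ∀ y, e y = 1 ↔ ‖y‖ ≤ 1) {z w : ι → K}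
    (h : ‖z‖ * ‖w‖ ≤ 1) : e (z ⬝ᵥ w) = 1 :=
  (he_one _).2 ((norm_dotProduct_le z w).trans h)

end Ultrametric

variable [MeasurableSpace (ι → K)]

noncomputable def fourier (e : AddChar K ℂ) (μ : Measure (ι → K)) (f : (ι → K) → ℂ)
    (ξ : ι → K) : ℂ :=
  ∫ x, e (ξ ⬝ᵥ x) * f x ∂μ

noncomputable def fourierInv (e : AddChar K ℂ) (μ : Measure (ι → K)) (g : (ι → K) → ℂ)
    (x : ι → K) : ℂ :=
  ∫ ξ, e (-(ξ ⬝ᵥ x)) * g ξ ∂μ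

noncomputable def heatFlow (e : AddChar K ℂ) (μ : Measure (ι → K)) (P : (ι → K) → ℝ)
    (f : (ι → K) → ℂ) (t : ℝ) : (ι → K) → ℂ :=
  fourierInv e μ (fun ξ => Complex.exp (-t * P ξ) * fourier e μ f ξ)

variable (μ : Measure (ι → K)) {P : (ι → K) → ℝ} {f : (ι → K) → ℂ}

lemma fourierInv_apply_eq_fourier_neg (g : (ι → K) → ℂ) (x : ι → K) :
    fourierInv e μ g x = fourier e μ g (-x) := by
  simp only [fourier, fourierInv, neg_dotProduct, dotProduct_comm x]

lemma norm_heatFlow_le (he_norm : ∀ y, ‖e y‖ = 1) (hP : ∀ ξ, 0 ≤ P ξ)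
    (hFi : Integrable (fourier e μ f) μ) {t : ℝ} (ht : 0 ≤ t) (x : ι → K) :
    ‖heatFlow e μ P f t x‖ ≤ ∫ ξ, ‖fourier e μ f ξ‖ ∂μ := by
  refine norm_integral_le_of_norm_le hFi.norm (ae_of_all _ fun ξ => ?_)
  rw [norm_mul, he_norm, one_mul, norm_mul, norm_cexp_neg_ofReal_mul]
  refine mul_le_of_le_one_left (norm_nonneg _) (Real.exp_le_one_iff.2 ?_)
  rw [neg_mul]
  exact neg_nonpos.2 (mul_nonneg ht (hP ξ))

variable [BorelSpace (ι → K)]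

lemma continuous_fourier (he : Continuous e) (he_norm : ∀ y, ‖e y‖ = 1)
    (hf : Integrable f μ) : Continuous (fourier e μ f) :=
  continuous_of_dominated
    (fun ξ => (he.comp (continuous_const.dotProduct continuous_id)).aestronglyMeasurable.mul hf.1)
    (fun ξ => ae_of_all _ fun y => by rw [norm_mul, he_norm, one_mul]) hf.norm
    (ae_of_all _ fun y =>
      (he.comp (continuous_id.dotProduct continuous_const)).mul continuous_const)

theorem hasDerivAt_heatFlow (he : Continuous e) (he_norm : ∀ y, ‖e y‖ = 1) (hP : Continuous P)
    (hFi : Integrable (fourier e μ f) μ) (hFcs : HasCompactSupport (fourier e μ f))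
    (x : ι → K) (t : ℝ) :
    HasDerivAt (fun s => heatFlow e μ P f s x)
      (-fourierInv e μ (fun ξ => P ξ * Complex.exp (-t * P ξ) * fourier e μ f ξ) x) t := by
  obtain ⟨C, hC⟩ := hFcs.isCompact.exists_bound_of_continuousOn hP.continuousOn
  have := hasDerivAt_integral_cexp_neg_mul hP.measurable
    (integrable_addChar_mul he he_norm (fun ξ => -(ξ ⬝ᵥ x)) (by fun_prop) hFi) (C := C)
    (fun ξ hξ => (Real.norm_eq_abs _).symm.trans_le
      (hC ξ (subset_tsupport _ (support_mul_subset_right _ _ hξ)))) t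
  simp only [heatFlow, fourierInv]
  convert this using 3 <;> funext ξ <;> ring

variable [μ.IsAddHaarMeasure]

lemma fourier_eq_zero_of_forall_add_eq (he_one : ∀ y, e y = 1 ↔ ‖y‖ ≤ 1) {c : K} (hc : c ≠ 0)
    (hf : ∀ y w, ‖w‖ ≤ ‖c‖ → f (y + w) = f y) {ξ : ι → K} (hξ : ‖c‖⁻¹ < ‖ξ‖) :
    fourier e μ f ξ = 0 := by
  obtain ⟨w₀, hw₀, hne⟩ := exists_norm_le_map_dotProduct_ne_one he_one hc hξ
  refine integral_eq_zero_of_add_right_eq_mul (w₀ := w₀) hne fun y => ?_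
  rw [dotProduct_add, AddChar.map_add_eq_mul, hf y w₀ hw₀]
  ring

lemma setIntegral_closedBall_map_dotProduct [IsUltrametricDist K]
    (he_one : ∀ y, e y = 1 ↔ ‖y‖ ≤ 1) {c : K} (hc : c ≠ 0) (z : ι → K) :
    ∫ w in closedBall 0 ‖c‖, e (z ⬝ᵥ w) ∂μ =
      (closedBall 0 ‖c‖⁻¹).indicator (fun _ => (μ.real (closedBall 0 ‖c‖) : ℂ)) z := by
  by_cases hz : z ∈ closedBall (0 : ι → K) ‖c‖⁻¹
  · rw [Set.indicator_of_mem hz, setIntegral_congr_fun measurableSet_closedBall (g := fun _ => 1)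
      fun w hw => map_dotProduct_eq_one he_one ?_]
    · simp
    · rw [mem_closedBall_zero_iff] at hz hw
      calc ‖z‖ * ‖w‖ ≤ ‖c‖⁻¹ * ‖c‖ := mul_le_mul hz hw (norm_nonneg _) (by positivity)
        _ = 1 := inv_mul_cancel₀ (norm_ne_zero_iff.2 hc)
  · rw [Set.indicator_of_notMem hz, ← integral_indicator measurableSet_closedBall]
    rw [mem_closedBall_zero_iff, not_le] at hz
    obtain ⟨w₀, hw₀, hne⟩ := exists_norm_le_map_dotProduct_ne_one he_one hc hz
    refine integral_eq_zero_of_add_right_eq_mul (w₀ := w₀) hne fun w => ?_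
    have hB : w + w₀ ∈ closedBall (0 : ι → K) ‖c‖ ↔ w ∈ closedBall 0 ‖c‖ :=
      add_mem_cancel_right (H := IsUltrametricDist.closedBall_openAddSubgroup (ι → K)
        (norm_pos_iff.2 hc)) (mem_closedBall_zero_iff.2 hw₀)
    by_cases hw : w ∈ closedBall (0 : ι → K) ‖c‖
    · rw [Set.indicator_of_mem (hB.2 hw), Set.indicator_of_mem hw, dotProduct_add,
        AddChar.map_add_eq_mul, mul_comm]
    · rw [Set.indicator_of_notMem (mt hB.1 hw), Set.indicator_of_notMem hw, mul_zero]

variable [ProperSpace K]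

lemma fourier_eq_fourierInv_comp_neg (f : (ι → K) → ℂ) :
    fourier e μ f = fourierInv e μ (fun y => f (-y)) := by
  funext ξ
  rw [fourierInv, ← integral_neg_eq_self]
  simp only [fourier, neg_dotProduct, neg_neg, dotProduct_comm ξ]

lemma hasCompactSupport_fourier (he_one : ∀ y, e y = 1 ↔ ‖y‖ ≤ 1)
    (hf : IsLocallyConstant f) (hcs : HasCompactSupport f) : HasCompactSupport (fourier e μ f) := by
  obtain ⟨δ, hδ, hfδ⟩ := hf.exists_pos_forall_dist_lt_eq hcs
  obtain ⟨c, hc0, hcδ⟩ := NormedField.exists_norm_lt K hδ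
  refine HasCompactSupport.intro (isCompact_closedBall 0 ‖c‖⁻¹) fun ξ hξ =>
    fourier_eq_zero_of_forall_add_eq μ he_one (norm_pos_iff.1 hc0) (fun y w hw => ?_)
      (by simpa using hξ)
  refine hfδ _ _ ?_
  rw [dist_eq_norm, add_sub_cancel_left]
  exact hw.trans_lt hcδ

lemma fourierInv_mul_fourier (he : Continuous e) (he_norm : ∀ y, ‖e y‖ = 1)
    {g : (ι → K) → ℂ} (hf : Integrable f μ) (hg : Integrable g μ) :
    fourierInv e μ (fun ξ => g ξ * fourier e μ f ξ) =
      f ⋆[ContinuousLinearMap.mul ℂ ℂ, μ] fourierInv e μ g := by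
  funext y
  have hint : Integrable (fun z : (ι → K) × (ι → K) => e (-(z.1 ⬝ᵥ (y - z.2))) * (g z.1 * f z.2))
      (μ.prod μ) :=
    integrable_addChar_mul he he_norm _ (by fun_prop) (hg.mul_prod hf)
  calc fourierInv e μ (fun ξ => g ξ * fourier e μ f ξ) y
      = ∫ ξ, ∫ z, e (-(ξ ⬝ᵥ (y - z))) * (g ξ * f z) ∂μ ∂μ := by
        refine integral_congr_ae (ae_of_all _ fun ξ => ?_)
        simp only [fourier, ← integral_const_mul]
        refine integral_congr_ae (ae_of_all _ fun z => ?_)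
        simp only [← map_neg_dotProduct_mul_map_dotProduct]
        ring
    _ = ∫ z, ∫ ξ, e (-(ξ ⬝ᵥ (y - z))) * (g ξ * f z) ∂μ ∂μ := integral_integral_swap hint
    _ = (f ⋆[ContinuousLinearMap.mul ℂ ℂ, μ] fourierInv e μ g) y := by
        simp only [convolution_def, ContinuousLinearMap.mul_apply', fourierInv,
          ← integral_const_mul]
        refine integral_congr_ae (ae_of_all _ fun z => integral_congr_ae (ae_of_all _ fun ξ => ?_))
        ring

lemma integrable_heatFlow (he : Continuous e) (he_norm : ∀ y, ‖e y‖ = 1) (hP : Measurable P)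
    {t : ℝ} (hexp : Integrable (fun ξ => Real.exp (-t * P ξ)) μ)
    (hZ : ∀ x, 0 ≤ fourierInv e μ (fun ξ => Complex.exp (-t * P ξ)) x)
    (hZ_re : ∫ x, (fourierInv e μ (fun ξ => Complex.exp (-t * P ξ)) x).re ∂μ ≠ 0)
    (hf : Integrable f μ) : Integrable (heatFlow e μ P f t) μ := by
  have hE : Integrable (fun ξ => Complex.exp (-t * P ξ)) μ :=
    hexp.mono' (by fun_prop : Measurable fun ξ => Complex.exp (-t * P ξ)).aestronglyMeasurable
      (ae_of_all _ fun ξ => (norm_cexp_neg_ofReal_mul t (P ξ)).le)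
  rw [heatFlow, fourierInv_mul_fourier μ he he_norm hf hE]
  exact hf.integrable_convolution _ (integrable_of_nonneg_of_integral_re_ne_zero hZ hZ_re)

variable [IsUltrametricDist K]

lemma measureReal_closedBall_mul_measureReal_closedBall_inv (he : Continuous e)
    (he_norm : ∀ y, ‖e y‖ = 1) (he_one : ∀ y, e y = 1 ↔ ‖y‖ ≤ 1)
    (hnorm : μ (closedBall 0 1) = 1) {c : K} (hc : c ≠ 0) :
    μ.real (closedBall 0 ‖c‖) * μ.real (closedBall (0 : ι → K) ‖c‖⁻¹) = 1 := by
  wlog h1 : 1 ≤ ‖c‖ generalizing c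
  · have := this (inv_ne_zero hc)
      (by rw [norm_inv]; exact (one_le_inv₀ (norm_pos_iff.2 hc)).2 (not_le.1 h1).le)
    rwa [norm_inv, inv_inv, mul_comm] at this
  have hB₁ : μ.real (closedBall (0 : ι → K) 1) = 1 := by simp [measureReal_def, hnorm]
  have : IsFiniteMeasure (μ.restrict (closedBall 0 ‖c‖)) :=
    isFiniteMeasure_restrict.2 measure_closedBall_lt_top.ne
  have : IsFiniteMeasure (μ.restrict (closedBall 0 1)) :=
    isFiniteMeasure_restrict.2 measure_closedBall_lt_top.ne
  have h := integral_integral_swap (μ := μ.restrict (closedBall 0 ‖c‖))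
    (ν := μ.restrict (closedBall 0 1)) (f := fun w η => e (w ⬝ᵥ η))
    ((integrable_const (1 : ℝ)).mono'
      (he.comp (continuous_fst.dotProduct continuous_snd)).aestronglyMeasurable
      (ae_of_all _ fun w => (he_norm _).le))
  have inner₁ (w : ι → K) : ∫ η in closedBall 0 1, e (w ⬝ᵥ η) ∂μ =
      (closedBall 0 1).indicator (fun _ => 1) w := by
    simpa [hB₁] using setIntegral_closedBall_map_dotProduct μ he_one one_ne_zero w
  have inner₂ (η : ι → K) : ∫ w in closedBall 0 ‖c‖, e (w ⬝ᵥ η) ∂μ =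
      (closedBall 0 ‖c‖⁻¹).indicator (fun _ => (μ.real (closedBall 0 ‖c‖) : ℂ)) η := by
    simpa only [dotProduct_comm] using setIntegral_closedBall_map_dotProduct μ he_one hc η
  simp only [inner₁, inner₂, setIntegral_indicator measurableSet_closedBall,
    setIntegral_const] at h
  rw [Set.inter_eq_right.2 (closedBall_subset_closedBall h1),
    Set.inter_eq_right.2 (closedBall_subset_closedBall (inv_le_one_of_one_le₀ h1)), hB₁] at h
  have : (1 : ℂ) = μ.real (closedBall (0 : ι → K) ‖c‖⁻¹) * μ.real (closedBall 0 ‖c‖) := by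
    simpa using h
  rw [mul_comm]
  exact_mod_cast this.symm

lemma setIntegral_closedBall_mul_fourierInv (he : Continuous e) (he_norm : ∀ y, ‖e y‖ = 1)
    (he_one : ∀ y, e y = 1 ↔ ‖y‖ ≤ 1) {h : (ι → K) → ℂ} (hh : Integrable h μ) {c : K}
    (hc : c ≠ 0) (a : ι → K) :
    ∫ w in closedBall 0 ‖c‖⁻¹, e (a ⬝ᵥ w) * fourierInv e μ h w ∂μ =
      μ.real (closedBall (0 : ι → K) ‖c‖⁻¹) * ∫ η in closedBall a ‖c‖, h η ∂μ := by
  set B := closedBall (0 : ι → K) ‖c‖⁻¹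
  have : IsFiniteMeasure (μ.restrict B) := isFiniteMeasure_restrict.2 measure_closedBall_lt_top.ne
  have hint : Integrable (fun z : (ι → K) × (ι → K) => e ((a - z.2) ⬝ᵥ z.1) * h z.2)
      ((μ.restrict B).prod μ) := by
    simpa only [one_mul] using integrable_addChar_mul he he_norm (fun z => (a - z.2) ⬝ᵥ z.1)
      ((continuous_const.sub continuous_snd).dotProduct continuous_fst)
      ((integrable_const (1 : ℂ)).mul_prod hh)
  have hchar (w η : ι → K) : e (a ⬝ᵥ w) * (e (-(η ⬝ᵥ w)) * h η) = e ((a - η) ⬝ᵥ w) * h η := by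
    rw [← mul_assoc, ← AddChar.map_add_eq_mul, sub_dotProduct, sub_eq_add_neg]
  have hdual (η : ι → K) : ∫ w in B, e ((a - η) ⬝ᵥ w) * h η ∂μ =
      (closedBall a ‖c‖).indicator (fun η => μ.real B * h η) η := by
    have := setIntegral_closedBall_map_dotProduct μ he_one (inv_ne_zero hc) (a - η)
    rw [norm_inv, inv_inv] at this
    have hmem : a - η ∈ closedBall 0 ‖c‖ ↔ η ∈ closedBall a ‖c‖ := by
      rw [mem_closedBall_zero_iff, ← mem_closedBall_iff_norm']
    rw [integral_mul_const, this]
    by_cases hη : η ∈ closedBall a ‖c‖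
    · rw [Set.indicator_of_mem hη, Set.indicator_of_mem (hmem.2 hη)]
    · rw [Set.indicator_of_notMem hη, Set.indicator_of_notMem (mt hmem.1 hη), zero_mul]
  calc ∫ w in B, e (a ⬝ᵥ w) * fourierInv e μ h w ∂μ
      = ∫ w in B, ∫ η, e ((a - η) ⬝ᵥ w) * h η ∂μ ∂μ := by
        simp only [fourierInv, ← integral_const_mul, hchar]
    _ = ∫ η, ∫ w in B, e ((a - η) ⬝ᵥ w) * h η ∂μ ∂μ := integral_integral_swap hint
    _ = ∫ η, (closedBall a ‖c‖).indicator (fun η => μ.real B * h η) η ∂μ := by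
        simp only [hdual]
    _ = μ.real B * ∫ η in closedBall a ‖c‖, h η ∂μ := by
        rw [integral_indicator measurableSet_closedBall, integral_const_mul]

theorem fourier_fourierInv (he : Continuous e) (he_norm : ∀ y, ‖e y‖ = 1)
    (he_one : ∀ y, e y = 1 ↔ ‖y‖ ≤ 1) (hnorm : μ (closedBall 0 1) = 1) {h : (ι → K) → ℂ}
    (hh : Integrable h μ) (hhc : Continuous h) (hFi : Integrable (fourierInv e μ h) μ) :
    fourier e μ (fourierInv e μ h) = h := by
  funext a
  obtain ⟨ϖ, hϖ0, hϖ1⟩ := NormedField.exists_norm_lt_one K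
  have hc (k : ℕ) : ϖ ^ k ≠ 0 := pow_ne_zero k (norm_pos_iff.1 hϖ0)
  have hr : Tendsto (fun k : ℕ => ‖ϖ ^ k‖) atTop (𝓝 0) := by
    simpa only [norm_pow] using tendsto_pow_atTop_nhds_zero_of_lt_one hϖ0.le hϖ1
  have hR : Tendsto (fun k : ℕ => ‖ϖ ^ k‖⁻¹) atTop atTop :=
    tendsto_inv_nhdsGT_zero.comp
      (tendsto_nhdsWithin_iff.2 ⟨hr, Eventually.of_forall fun k => norm_pos_iff.2 (hc k)⟩)
  have hlim := (aecover_closedBall (μ := μ) (x := 0) hR).integral_tendsto_of_countably_generated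
    (integrable_addChar_mul he he_norm (a ⬝ᵥ ·) (continuous_const.dotProduct continuous_id) hFi)
  have havg := tendsto_setAverage_closedBall hh.locallyIntegrable (hhc.continuousAt (x := a)) hr
    fun k => norm_pos_iff.2 (hc k)
  refine tendsto_nhds_unique (hlim.congr fun k => ?_) havg
  rw [setIntegral_closedBall_mul_fourierInv μ he he_norm he_one hh (hc k), setAverage_eq,
    Measure.addHaar_real_closedBall_center μ a, Complex.real_smul, eq_inv_of_mul_eq_one_right
      (measureReal_closedBall_mul_measureReal_closedBall_inv μ he he_norm he_one hnorm (hc k)),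
    Complex.ofReal_inv]

theorem fourierInv_fourier (he : Continuous e) (he_norm : ∀ y, ‖e y‖ = 1)
    (he_one : ∀ y, e y = 1 ↔ ‖y‖ ≤ 1) (hnorm : μ (closedBall 0 1) = 1) (hf : Integrable f μ)
    (hfc : Continuous f) (hFi : Integrable (fourier e μ f) μ) :
    fourierInv e μ (fourier e μ f) = f := by
  funext x
  rw [fourierInv_apply_eq_fourier_neg, fourier_eq_fourierInv_comp_neg μ f] at *
  rw [fourier_fourierInv μ he he_norm he_one hnorm hf.comp_neg (hfc.comp continuous_neg) hFi]
  exact congrArg f (neg_neg x)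

lemma heatFlow_zero (he : Continuous e) (he_norm : ∀ y, ‖e y‖ = 1)
    (he_one : ∀ y, e y = 1 ↔ ‖y‖ ≤ 1) (hnorm : μ (closedBall 0 1) = 1) (hf : Integrable f μ)
    (hfc : Continuous f) (hFi : Integrable (fourier e μ f) μ) : heatFlow e μ P f 0 = f := by
  simpa [heatFlow] using fourierInv_fourier μ he he_norm he_one hnorm hf hfc hFi

lemma fourier_heatFlow (he : Continuous e) (he_norm : ∀ y, ‖e y‖ = 1)
    (he_one : ∀ y, e y = 1 ↔ ‖y‖ ≤ 1) (hnorm : μ (closedBall 0 1) = 1) (hP : Continuous P)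
    (hFc : Continuous (fourier e μ f)) (hFcs : HasCompactSupport (fourier e μ f)) {t : ℝ}
    (hint : Integrable (heatFlow e μ P f t) μ) :
    fourier e μ (heatFlow e μ P f t) = fun ξ => Complex.exp (-t * P ξ) * fourier e μ f ξ := by
  have hc : Continuous fun ξ => Complex.exp (-t * P ξ) * fourier e μ f ξ := by fun_prop
  exact fourier_fourierInv μ he he_norm he_one hnorm
    (hc.integrable_of_hasCompactSupport hFcs.mul_left) hc hint

end NonarchimedeanFourier

open NonarchimedeanFourier

theorem stmt_19_general {p n : ℕ} [Fact p.Prime]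
    [MeasurableSpace (Fin n → ℚ_[p])] [BorelSpace (Fin n → ℚ_[p])]
    (μ : Measure (Fin n → ℚ_[p])) [μ.IsAddHaarMeasure]
    (hnorm : μ (Metric.closedBall 0 1) = 1)
    (e : AddChar ℚ_[p] ℂ) (he : Continuous e) (hunit : ∀ y, ‖e y‖ = 1)
    (htriv : ∀ y : ℚ_[p], e y = 1 ↔ ‖y‖ ≤ 1)
    (P : (Fin n → ℚ_[p]) → ℝ) (hPc : Continuous P) (hPpos : ∀ ξ, 0 ≤ P ξ)
    (hint : ∀ t : ℝ, 0 < t →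
      Integrable (fun ξ : Fin n → ℚ_[p] => Real.exp (-t * P ξ)) μ)
    -- the heat kernel `Z_t` is a nonnegative probability density
    (hZpos : ∀ t : ℝ, 0 < t → ∀ x : Fin n → ℚ_[p],
      0 ≤ ∫ ξ, e (-(∑ i, ξ i * x i)) * Complex.exp (-(t : ℂ) * (P ξ : ℝ)) ∂μ)
    (hZprob : ∀ t : ℝ, 0 < t →
      (∫ x : Fin n → ℚ_[p],
        (∫ ξ, e (-(∑ i, ξ i * x i)) * Complex.exp (-(t : ℂ) * (P ξ : ℝ)) ∂μ).re ∂μ) = 1)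
    (u₀ : (Fin n → ℚ_[p]) → ℂ) (hlc : IsLocallyConstant u₀) (hcs : HasCompactSupport u₀)
    (u₀hat : (Fin n → ℚ_[p]) → ℂ)
    (hu₀hat : ∀ ξ, u₀hat ξ = ∫ y, e (∑ i, ξ i * y i) * u₀ y ∂μ)
    (u : (Fin n → ℚ_[p]) → ℝ → ℂ)
    (hu : ∀ x t, u x t =
      ∫ ξ, e (-(∑ i, ξ i * x i)) * Complex.exp (-(t : ℂ) * (P ξ : ℝ)) * u₀hat ξ ∂μ) :
    (∀ t : ℝ, 0 ≤ t →
        Integrable (fun x => u x t) μ ∧ MemLp (fun x => u x t) 2 μ) ∧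
    (∀ x, u x 0 = u₀ x) ∧
    (∀ x : Fin n → ℚ_[p], ∀ t : ℝ, 0 ≤ t →
      HasDerivWithinAt (fun s => u x s)
        (-(∫ ξ, e (-(∑ i, ξ i * x i)) *
            ((P ξ : ℂ) * Complex.exp (-(t : ℂ) * (P ξ : ℝ)) * u₀hat ξ) ∂μ))
        (Set.Ici 0) t) ∧
    (∀ x : Fin n → ℚ_[p], ∀ t : ℝ, 0 ≤ t →
      HasDerivWithinAt (fun s => u x s)
        (-(∫ ξ, e (-(∑ i, ξ i * x i)) *
            ((P ξ : ℂ) * ∫ y, e (∑ i, ξ i * y i) * u y t ∂μ) ∂μ))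
        (Set.Ici 0) t) := by
  obtain rfl : u₀hat = fourier e μ u₀ := funext hu₀hat
  obtain rfl : u = fun x t => heatFlow e μ P u₀ t x := by
    funext x t
    simp only [hu, heatFlow, fourierInv, mul_assoc]
    rfl
  have hu₀c := hlc.continuous
  have hu₀i := hu₀c.integrable_of_hasCompactSupport (μ := μ) hcs
  have hFcs := hasCompactSupport_fourier μ htriv hlc hcs
  have hFc := continuous_fourier μ he hunit hu₀i
  have hFi := hFc.integrable_of_hasCompactSupport (μ := μ) hFcs
  have h0 := heatFlow_zero (P := P) μ he hunit htriv hnorm hu₀i hu₀c hFi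
  have hu_int (t : ℝ) (ht : 0 ≤ t) : Integrable (heatFlow e μ P u₀ t) μ := by
    rcases ht.eq_or_lt with rfl | ht
    · rwa [h0]
    · exact integrable_heatFlow μ he hunit hPc.measurable (hint t ht) (hZpos t ht)
        ((hZprob t ht).trans_ne one_ne_zero) hu₀i
  have hderiv := hasDerivAt_heatFlow μ he hunit hPc hFi hFcs
  refine ⟨fun t ht => ⟨hu_int t ht, memLp_two_of_integrable_of_norm_le (hu_int t ht)
    (norm_heatFlow_le μ hunit hPpos hFi ht)⟩, fun x => congrFun h0 x,
    fun x t _ => (hderiv x t).hasDerivWithinAt, fun x t ht => ?_⟩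
  have hFt (ξ : Fin n → ℚ_[p]) : ∫ y, e (∑ i, ξ i * y i) * heatFlow e μ P u₀ t y ∂μ =
      Complex.exp (-t * P ξ) * fourier e μ u₀ ξ :=
    congrFun (fourier_heatFlow μ he hunit htriv hnorm hPc hFc hFcs (hu_int t ht)) ξ
  refine (hderiv x t).hasDerivWithinAt.congr_deriv ?_
  simp only [hFt, fourierInv, mul_assoc]
  rfl

/-- For a continuous nonnegative negative definite symbol `p` with `p(0) = 0`,
`e^{−tp} ∈ L¹` and heat kernel `Z_t = ℱ⁻¹(e^{−tp}) ≥ 0` a probability density, the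
function `u(x,t) = ∫ χ(−x·ξ) e^{−tp(ξ)} û₀(ξ) dξ` is in `L¹ ∩ L²` for every `t ≥ 0`,
satisfies `u(x,0) = u₀(x)`, is differentiable in `t` with
`∂u/∂t = −∫ χ(−x·ξ) p(ξ)e^{−tp(ξ)} û₀(ξ) dξ`, and solves `∂u/∂t = −ℱ⁻¹(p ℱu)`. -/
theorem stmt_19 {p n : ℕ} [Fact p.Prime]
    [MeasurableSpace (Fin n → ℚ_[p])] [BorelSpace (Fin n → ℚ_[p])]
    (μ : Measure (Fin n → ℚ_[p])) [μ.IsAddHaarMeasure]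
    (hnorm : μ (Metric.closedBall 0 1) = 1)
    (e : AddChar ℚ_[p] ℂ) (he : Continuous e) (hunit : ∀ y, ‖e y‖ = 1)
    (htriv : ∀ y : ℚ_[p], e y = 1 ↔ ‖y‖ ≤ 1)
    (P : (Fin n → ℚ_[p]) → ℝ) (hPc : Continuous P) (hPpos : ∀ ξ, 0 ≤ P ξ)
    (hPneg : IsNegativeDefinite (fun ξ => (P ξ : ℂ))) (hP0 : P 0 = 0)
    (hint : ∀ t : ℝ, 0 < t →
      Integrable (fun ξ : Fin n → ℚ_[p] => Real.exp (-t * P ξ)) μ)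
    -- the heat kernel `Z_t` is a nonnegative probability density
    (hZpos : ∀ t : ℝ, 0 < t → ∀ x : Fin n → ℚ_[p],
      0 ≤ ∫ ξ, e (-(∑ i, ξ i * x i)) * Complex.exp (-(t : ℂ) * (P ξ : ℝ)) ∂μ)
    (hZprob : ∀ t : ℝ, 0 < t →
      (∫ x : Fin n → ℚ_[p],
        (∫ ξ, e (-(∑ i, ξ i * x i)) * Complex.exp (-(t : ℂ) * (P ξ : ℝ)) ∂μ).re ∂μ) = 1)
    (u₀ : (Fin n → ℚ_[p]) → ℂ) (hlc : IsLocallyConstant u₀) (hcs : HasCompactSupport u₀)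
    (u₀hat : (Fin n → ℚ_[p]) → ℂ)
    (hu₀hat : ∀ ξ, u₀hat ξ = ∫ y, e (∑ i, ξ i * y i) * u₀ y ∂μ)
    (u : (Fin n → ℚ_[p]) → ℝ → ℂ)
    (hu : ∀ x t, u x t =
      ∫ ξ, e (-(∑ i, ξ i * x i)) * Complex.exp (-(t : ℂ) * (P ξ : ℝ)) * u₀hat ξ ∂μ) :
    (∀ t : ℝ, 0 ≤ t →
        Integrable (fun x => u x t) μ ∧ MemLp (fun x => u x t) 2 μ) ∧
    (∀ x, u x 0 = u₀ x) ∧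
    (∀ x : Fin n → ℚ_[p], ∀ t : ℝ, 0 ≤ t →
      HasDerivWithinAt (fun s => u x s)
        (-(∫ ξ, e (-(∑ i, ξ i * x i)) *
            ((P ξ : ℂ) * Complex.exp (-(t : ℂ) * (P ξ : ℝ)) * u₀hat ξ) ∂μ))
        (Set.Ici 0) t) ∧
    (∀ x : Fin n → ℚ_[p], ∀ t : ℝ, 0 ≤ t →
      HasDerivWithinAt (fun s => u x s)
        (-(∫ ξ, e (-(∑ i, ξ i * x i)) *
            ((P ξ : ℂ) * ∫ y, e (∑ i, ξ i * y i) * u y t ∂μ) ∂μ))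
        (Set.Ici 0) t) :=
  stmt_19_general μ hnorm e he hunit htriv P hPc hPpos hint hZpos hZprob u₀ hlc hcs u₀hat hu₀hat u
    hu
end
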